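/- arXiv:2501.00519 — 4 statements merged into one kernel-verified Lean document; each statement's English description precedes it below -/
import Mathlib

section
/- Let $d = 3$ and let $\gamma : \mathbb{R}^d \setminus \{0\} \to \mathbb{R}_+$ be defined by $\gamma(x) = C(|x|^{-d+1} + |x|^{-d+2})$ for a constant $C$. Then there is a constant $C' < \infty$ such that for all $r \in (0,1]$ and all unit vectors $v \in S^{d-1}$, $\int_0^\infty e^{-s} \int_{\mathbb{R}^d} \gamma(y)\, \mathbf{1}\{\min_{-s/2 < t < s/2} |vt - y| < 2r\} \, dy \, ds \le C' r$. -/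
open MeasureTheory Set

noncomputable def greenKernel (C : ℝ) (x : EuclideanSpace ℝ (Fin 3)) : ℝ :=
  C * (‖x‖ ^ (-(2:ℝ)) + ‖x‖ ^ (-(1:ℝ)))

open Metric Finset
open scoped ENNReal

namespace S6
abbrev E : Type := EuclideanSpace ℝ (Fin 3)

lemma gk_eq (C : ℝ) (x : E) : greenKernel C x = C * ((‖x‖ ^ 2)⁻¹ + ‖x‖⁻¹) := by
  unfold greenKernel
  rw [Real.rpow_neg_one, ← Real.rpow_natCast ‖x‖ 2, ← Real.rpow_neg (norm_nonneg x)]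
  norm_num

lemma gk_nonneg (C : ℝ) (hC : 0 ≤ C) (x : E) : 0 ≤ greenKernel C x := by
  rw [gk_eq]; positivity

lemma gk_meas (C : ℝ) : Measurable (greenKernel C) := by
  have : greenKernel C = fun x : E => C * ((‖x‖ ^ 2)⁻¹ + ‖x‖⁻¹) := funext (gk_eq C)
  rw [this]
  exact measurable_const.mul (((measurable_norm.pow_const 2).inv).add measurable_norm.inv)

lemma vol_ball (c : E) {ρ : ℝ} (hρ : 0 ≤ ρ) :
    volume (ball c ρ) = ENNReal.ofReal (ρ ^ 3) * volume (ball (0:E) 1) := by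
  rw [Measure.addHaar_ball _ _ hρ, finrank_euclideanSpace, Fintype.card_fin]

lemma vol_closedBall (c : E) {ρ : ℝ} (hρ : 0 ≤ ρ) :
    volume (closedBall c ρ) = ENNReal.ofReal (ρ ^ 3) * volume (ball (0:E) 1) := by
  rw [Measure.addHaar_closedBall _ _ hρ, finrank_euclideanSpace, Fintype.card_fin]

lemma gk_le (C : ℝ) (hC : 0 ≤ C) {m : ℝ} (hm : 0 < m) {x : E} (hx : m ≤ ‖x‖) :
    greenKernel C x ≤ C * ((m ^ 2)⁻¹ + m⁻¹) := by
  rw [gk_eq]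
  have h1 : (‖x‖ ^ 2)⁻¹ ≤ (m ^ 2)⁻¹ := by
    apply inv_anti₀ (by positivity)
    exact pow_le_pow_left₀ hm.le hx 2
  have h2 : ‖x‖⁻¹ ≤ m⁻¹ := inv_anti₀ hm hx
  have := add_le_add h1 h2
  nlinarith

noncomputable def κ : ℝ≥0∞ := volume (Metric.ball (0:E) 1)

lemma κ_ne_top : κ ≠ ⊤ := measure_ball_lt_top.ne

lemma lint_le_const {C : ℝ} (hC : 0 ≤ C) {m : ℝ} (hm : 0 < m) (s : Set E)
    (hs : ∀ y ∈ s, m ≤ ‖y‖) :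
    ∫⁻ y in s, ENNReal.ofReal (greenKernel C y) ≤
      ENNReal.ofReal (C * ((m ^ 2)⁻¹ + m⁻¹)) * volume s := by
  calc ∫⁻ y in s, ENNReal.ofReal (greenKernel C y)
      ≤ ∫⁻ _ in s, ENNReal.ofReal (C * ((m ^ 2)⁻¹ + m⁻¹)) := by
        apply setLIntegral_mono measurable_const
        intro x hx
        exact ENNReal.ofReal_le_ofReal (gk_le C hC hm (hs x hx))
    _ = ENNReal.ofReal (C * ((m ^ 2)⁻¹ + m⁻¹)) * volume s := setLIntegral_const _ _

lemma farBall {C : ℝ} (hC : 0 ≤ C) (c : E) {ρ m : ℝ} (hρ : 0 ≤ ρ) (hm : 0 < m)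
    (hs : ∀ y ∈ Metric.ball c ρ, m ≤ ‖y‖) :
    ∫⁻ y in Metric.ball c ρ, ENNReal.ofReal (greenKernel C y) ≤
      ENNReal.ofReal (C * ((m ^ 2)⁻¹ + m⁻¹) * ρ ^ 3) * κ := by
  calc ∫⁻ y in Metric.ball c ρ, ENNReal.ofReal (greenKernel C y)
      ≤ ENNReal.ofReal (C * ((m ^ 2)⁻¹ + m⁻¹)) * volume (Metric.ball c ρ) :=
        lint_le_const hC hm _ hs
    _ = ENNReal.ofReal (C * ((m ^ 2)⁻¹ + m⁻¹) * ρ ^ 3) * κ := by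
        rw [vol_ball c hρ, ← mul_assoc, ← ENNReal.ofReal_mul (by positivity)]
        rfl

lemma exists_dyadic {R t : ℝ} (ht : 0 < t) (htR : t < R) :
    ∃ j : ℕ, R * (1/2)^(j+1) < t ∧ t ≤ R * (1/2)^j := by
  have hR : 0 < R := ht.trans htR
  set n : ℕ := ⌊R / t⌋₊ with hn
  have hRt : 1 < R / t := (one_lt_div ht).2 htR
  have hn1 : 1 ≤ n := Nat.one_le_floor_iff _ |>.2 hRt.le
  refine ⟨Nat.log 2 n, ?_, ?_⟩
  · have h2 : R / t < n + 1 := Nat.lt_floor_add_one _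
    have h3 : (n:ℝ) + 1 ≤ 2 ^ (Nat.log 2 n + 1) := by
      have : (n+1:ℕ) ≤ 2 ^ (Nat.log 2 n + 1) := Nat.lt_pow_succ_log_self (by norm_num) n
      exact_mod_cast this
    have h5 : R / t < 2 ^ (Nat.log 2 n + 1) := h2.trans_le h3
    rw [div_lt_iff₀ ht] at h5
    have hpow : ((2:ℝ) ^ (Nat.log 2 n + 1)) * ((1/2:ℝ) ^ (Nat.log 2 n + 1)) = 1 := by
      rw [← mul_pow]; norm_num
    have hp : (0:ℝ) < (1/2:ℝ) ^ (Nat.log 2 n + 1) := by positivity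
    nlinarith [mul_lt_mul_of_pos_right h5 hp]
  · have h2 : (2:ℝ) ^ Nat.log 2 n ≤ n := by
      exact_mod_cast Nat.pow_log_le_self 2 (by omega : n ≠ 0)
    have h3 : (n:ℝ) ≤ R / t := Nat.floor_le (by positivity)
    have h5 : (2:ℝ) ^ Nat.log 2 n ≤ R / t := h2.trans h3
    rw [le_div_iff₀ ht] at h5
    have hp : (0:ℝ) < (1/2:ℝ) ^ (Nat.log 2 n) := by positivity
    have hpow : ((2:ℝ) ^ (Nat.log 2 n)) * ((1/2:ℝ) ^ (Nat.log 2 n)) = 1 := by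
      rw [← mul_pow]; norm_num
    nlinarith [mul_le_mul_of_nonneg_right h5 hp.le]

lemma keyreal {C R : ℝ} (hC : 0 ≤ C) (hR : 0 < R) (j : ℕ) :
    C * (((R * (1/2)^(j+1)) ^ 2)⁻¹ + (R * (1/2)^(j+1))⁻¹) * (R * (1/2)^j) ^ 3
      ≤ C * (4*R + 2*R^2) * (1/2)^j := by
  have hq : (0:ℝ) < (1/2:ℝ)^j := by positivity
  have hq1 : ((1/2:ℝ))^j ≤ 1 := pow_le_one₀ (by norm_num) (by norm_num)
  set q := ((1/2:ℝ))^j with hqdef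
  have hstep : ((1/2:ℝ))^(j+1) = q/2 := by rw [pow_succ]; ring
  rw [hstep]
  have hEq : C * (((R * (q/2)) ^ 2)⁻¹ + (R * (q/2))⁻¹) * (R * q) ^ 3
      = C * (4*R*q + 2*R^2*q^2) := by
    field_simp
    ring
  rw [hEq]
  have hq2 : q * q ≤ q := by nlinarith
  have : 4*R*q + 2*R^2*q^2 ≤ (4*R + 2*R^2)*q := by nlinarith [mul_le_mul_of_nonneg_left hq2 (sq_nonneg R)]
  calc C * (4*R*q + 2*R^2*q^2) ≤ C * ((4*R + 2*R^2)*q) := by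
        exact mul_le_mul_of_nonneg_left this hC
    _ = C * (4*R + 2*R^2) * q := by ring

lemma nearBall {C : ℝ} (hC : 0 ≤ C) {R : ℝ} (hR : 0 < R) :
    ∫⁻ y in Metric.ball (0:E) R, ENNReal.ofReal (greenKernel C y) ≤
      ENNReal.ofReal (C * (8*R + 4*R^2)) * κ := by
  set g : E → ℝ≥0∞ := fun y => ENNReal.ofReal (greenKernel C y) with hg
  set A : ℕ → Set E := fun j =>
    closedBall (0:E) (R * (1/2)^j) \ closedBall (0:E) (R * (1/2)^(j+1)) with hA
  have hcover : Metric.ball (0:E) R ⊆ {0} ∪ ⋃ j, A j := by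
    intro y hy
    rcases eq_or_ne y 0 with h0 | h0
    · exact Or.inl (by simp [h0])
    · right
      have hy0 : 0 < ‖y‖ := norm_pos_iff.2 h0
      have hyR : ‖y‖ < R := by simpa [mem_ball, dist_zero_right] using hy
      obtain ⟨j, hj1, hj2⟩ := exists_dyadic hy0 hyR
      refine mem_iUnion.2 ⟨j, ?_, ?_⟩
      · simpa [mem_closedBall, dist_zero_right] using hj2
      · simp only [mem_closedBall, dist_zero_right, not_le]
        exact hj1
  have hzero : ∫⁻ y in ({0} : Set E), g y = 0 :=
    setLIntegral_measure_zero _ _ (measure_singleton 0)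
  have hAj : ∀ j : ℕ, ∫⁻ y in A j, g y ≤
      ENNReal.ofReal (C * (4*R + 2*R^2)) * ENNReal.ofReal ((1/2:ℝ)^j) * κ := by
    intro j
    have hm : (0:ℝ) < R * (1/2)^(j+1) := by positivity
    have hlow : ∀ y ∈ A j, R * (1/2)^(j+1) ≤ ‖y‖ := by
      intro y hy
      have := hy.2
      simp only [mem_closedBall, dist_zero_right, not_le] at this
      exact this.le
    calc ∫⁻ y in A j, g y
        ≤ ENNReal.ofReal (C * (((R * (1/2)^(j+1)) ^ 2)⁻¹ + (R * (1/2)^(j+1))⁻¹)) * volume (A j) :=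
          lint_le_const hC hm _ hlow
      _ ≤ ENNReal.ofReal (C * (((R * (1/2)^(j+1)) ^ 2)⁻¹ + (R * (1/2)^(j+1))⁻¹)) *
            (ENNReal.ofReal ((R * (1/2)^j) ^ 3) * κ) := by
          apply mul_le_mul_right
          calc volume (A j) ≤ volume (closedBall (0:E) (R * (1/2)^j)) :=
                measure_mono diff_subset
            _ = ENNReal.ofReal ((R * (1/2)^j) ^ 3) * κ :=
                vol_closedBall _ (by positivity)
      _ = ENNReal.ofReal (C * (((R * (1/2)^(j+1)) ^ 2)⁻¹ + (R * (1/2)^(j+1))⁻¹) *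
            (R * (1/2)^j) ^ 3) * κ := by
          rw [← mul_assoc, ← ENNReal.ofReal_mul (by positivity)]
      _ ≤ ENNReal.ofReal (C * (4*R + 2*R^2) * (1/2)^j) * κ := by
          exact mul_le_mul_left (ENNReal.ofReal_le_ofReal (keyreal hC hR j)) κ
      _ = ENNReal.ofReal (C * (4*R + 2*R^2)) * ENNReal.ofReal ((1/2:ℝ)^j) * κ := by
          rw [ENNReal.ofReal_mul (by positivity)]
  have hgeo : ∑' j : ℕ, (ENNReal.ofReal ((1/2:ℝ)^j)) = 2 := by
    have h : ∀ j : ℕ, ENNReal.ofReal ((1/2:ℝ)^j) = (2⁻¹ : ℝ≥0∞) ^ j := by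
      intro j
      rw [ENNReal.ofReal_pow (by norm_num)]
      congr 1
      rw [ENNReal.ofReal_div_of_pos (by norm_num), ENNReal.ofReal_one, ENNReal.ofReal_ofNat,
        one_div]
    simp_rw [h, ENNReal.tsum_geometric]
    rw [ENNReal.one_sub_inv_two]
    simp
  calc ∫⁻ y in Metric.ball (0:E) R, g y
      ≤ ∫⁻ y in ({0} : Set E) ∪ ⋃ j, A j, g y := lintegral_mono_set hcover
    _ ≤ (∫⁻ y in ({0} : Set E), g y) + ∫⁻ y in ⋃ j, A j, g y := lintegral_union_le _ _ _
    _ = ∫⁻ y in ⋃ j, A j, g y := by rw [hzero, zero_add]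
    _ ≤ ∑' j : ℕ, ∫⁻ y in A j, g y := lintegral_iUnion_le _ _
    _ ≤ ∑' j : ℕ, ENNReal.ofReal (C * (4*R + 2*R^2)) * ENNReal.ofReal ((1/2:ℝ)^j) * κ :=
        ENNReal.tsum_le_tsum hAj
    _ = ENNReal.ofReal (C * (4*R + 2*R^2)) * (∑' j : ℕ, ENNReal.ofReal ((1/2:ℝ)^j)) * κ := by
        rw [ENNReal.tsum_mul_right, ENNReal.tsum_mul_left]
    _ = ENNReal.ofReal (C * (8*R + 4*R^2)) * κ := by
        rw [hgeo]
        congr 1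
        rw [← ENNReal.ofReal_ofNat 2, ← ENNReal.ofReal_mul (by positivity)]
        ring_nf


lemma sum_inv_sq_aux : ∀ n : ℕ,
    (∑ k ∈ Finset.range (n+2), (if 2 ≤ k then (((k:ℝ))^2)⁻¹ else 0)) ≤ 1 - ((n:ℝ)+1)⁻¹ := by
  intro n
  induction n with
  | zero =>
    rw [Finset.sum_range_succ, Finset.sum_range_succ, Finset.sum_range_zero]
    norm_num
  | succ m ih =>
    rw [show m + 1 + 2 = (m + 2) + 1 by ring, Finset.sum_range_succ]
    have h2' : (if 2 ≤ m+2 then (((m+2:ℕ):ℝ)^2)⁻¹ else 0) = (((m:ℝ)+2)^2)⁻¹ := by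
      rw [if_pos (by omega)]; push_cast; ring
    rw [h2']
    have h1 : (0:ℝ) < (m:ℝ) + 1 := by positivity
    have h0 : (0:ℝ) < (m:ℝ) + 2 := by positivity
    have key : ((((m:ℝ)+2))^2)⁻¹ ≤ ((m:ℝ)+1)⁻¹ - ((m:ℝ)+2)⁻¹ := by
      have hd : ((m:ℝ)+1)⁻¹ - ((m:ℝ)+2)⁻¹ = (((m:ℝ)+1) * ((m:ℝ)+2))⁻¹ := by
        field_simp
        norm_num
      rw [hd]
      apply inv_anti₀ (by positivity)
      nlinarith
    have hcast : ((m:ℝ)+1+1)⁻¹ = ((m:ℝ)+2)⁻¹ := by congr 1; ring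
    push_cast
    rw [hcast]
    linarith

lemma sum_inv_sq (n : ℕ) :
    (∑ k ∈ Finset.range n, (if 2 ≤ k then (((k:ℝ))^2)⁻¹ else 0)) ≤ 1 := by
  match n with
  | 0 => simp
  | 1 => simp
  | (m+2) =>
    refine (sum_inv_sq_aux m).trans ?_
    have : (0:ℝ) < (m:ℝ)+1 := by positivity
    have : 0 ≤ ((m:ℝ)+1)⁻¹ := by positivity
    linarith

lemma sum_ite_le (n : ℕ) (x : ℝ) (hx : 0 ≤ x) :
    (∑ k ∈ Finset.range n, (if k ≤ 5 then x else 0)) ≤ 6 * x := by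
  have h : ∀ k ∈ Finset.range n, (if k ≤ 5 then x else 0) ≤ x * (if k ≤ 5 then 1 else 0) := by
    intro k _; split <;> simp
  calc (∑ k ∈ Finset.range n, (if k ≤ 5 then x else 0))
      ≤ ∑ k ∈ Finset.range n, x * (if k ≤ 5 then 1 else 0) := Finset.sum_le_sum h
    _ = x * ∑ k ∈ Finset.range n, (if k ≤ 5 then (1:ℝ) else 0) := by rw [Finset.mul_sum]
    _ ≤ x * 6 := by
        apply mul_le_mul_of_nonneg_left _ hx
        rw [Finset.sum_boole]
        have hsub : (Finset.range n).filter (fun k => k ≤ 5) ⊆ Finset.range 6 := by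
          intro k hk
          simp only [Finset.mem_filter] at hk
          exact Finset.mem_range.2 (by omega)
        have := Finset.card_le_card hsub
        simp only [Finset.card_range] at this
        exact_mod_cast this
    _ = 6 * x := mul_comm _ _

lemma ball_norm_lb {c : E} {ρ m : ℝ} (hc : m + ρ ≤ ‖c‖) :
    ∀ y ∈ Metric.ball c ρ, m ≤ ‖y‖ := by
  intro y hy
  rw [mem_ball, dist_eq_norm] at hy
  have := norm_sub_norm_le c y
  rw [norm_sub_rev] at hy
  linarith [norm_sub_rev y c ▸ hy]

lemma oneBall {C : ℝ} (hC : 0 ≤ C) {r : ℝ} (hr0 : 0 < r) (hr1 : r ≤ 1) (k : ℕ) (c : E)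
    (hc : ‖c‖ = (k:ℝ) * r) :
    ∫⁻ y in Metric.ball c (3*r), ENNReal.ofReal (greenKernel C y) ≤
      ENNReal.ofReal (C * (if k ≤ 5 then 320*r else 108*r/(k:ℝ)^2 + 54*r^2/(k:ℝ))) * κ := by
  by_cases hk : k ≤ 5
  · rw [if_pos hk]
    have hsub : Metric.ball c (3*r) ⊆ Metric.ball (0:E) (8*r) := by
      intro y hy
      rw [mem_ball, dist_eq_norm] at hy
      rw [mem_ball, dist_zero_right]
      have h1 : ‖y‖ ≤ ‖y - c‖ + ‖c‖ := by simpa using norm_add_le (y - c) c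
      have h2 : (k:ℝ) ≤ 5 := by exact_mod_cast hk
      have h3 : ‖c‖ ≤ 5 * r := by rw [hc]; nlinarith
      linarith
    calc ∫⁻ y in Metric.ball c (3*r), ENNReal.ofReal (greenKernel C y)
        ≤ ∫⁻ y in Metric.ball (0:E) (8*r), ENNReal.ofReal (greenKernel C y) :=
          lintegral_mono_set hsub
      _ ≤ ENNReal.ofReal (C * (8*(8*r) + 4*(8*r)^2)) * κ := nearBall hC (by positivity)
      _ ≤ ENNReal.ofReal (C * (320*r)) * κ := by
          apply mul_le_mul_left
          apply ENNReal.ofReal_le_ofReal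
          apply mul_le_mul_of_nonneg_left _ hC
          nlinarith
  · rw [if_neg hk]
    push_neg at hk
    have hk6 : (6:ℝ) ≤ (k:ℕ) := by exact_mod_cast hk
    have hkpos : (0:ℝ) < (k:ℝ) := by linarith
    have hm : (0:ℝ) < (k:ℝ) * r / 2 := by positivity
    have hlb : ∀ y ∈ Metric.ball c (3*r), (k:ℝ) * r / 2 ≤ ‖y‖ := by
      apply ball_norm_lb
      rw [hc]
      nlinarith
    calc ∫⁻ y in Metric.ball c (3*r), ENNReal.ofReal (greenKernel C y)
        ≤ ENNReal.ofReal (C * ((((k:ℝ)*r/2) ^ 2)⁻¹ + ((k:ℝ)*r/2)⁻¹) * (3*r) ^ 3) * κ :=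
          farBall hC c (by positivity) hm hlb
      _ = ENNReal.ofReal (C * (108*r/(k:ℝ)^2 + 54*r^2/(k:ℝ))) * κ := by
          congr 2
          have h1 : (((k:ℝ)*r/2) ^ 2)⁻¹ = 4 / ((k:ℝ)^2 * r^2) := by
            rw [div_pow]; rw [inv_div]; ring_nf
          field_simp
          ring

lemma tube {C : ℝ} (hC : 0 ≤ C) {r : ℝ} (hr0 : 0 < r) (hr1 : r ≤ 1) {s : ℝ} (hs : 0 < s)
    (v : E) (hv : ‖v‖ = 1) :
    ∫⁻ y in {y : E | ∃ t ∈ Set.Ioo (-s/2) (s/2), ‖t • v - y‖ < 2 * r},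
      ENNReal.ofReal (greenKernel C y) ≤ ENNReal.ofReal (C * (4164*r + 54*(r*s))) * κ := by
  set g : E → ℝ≥0∞ := fun y => ENNReal.ofReal (greenKernel C y) with hg
  set K : ℕ := ⌊s/(2*r)⌋₊ with hK
  set D : ℕ → Set E := fun k =>
    Metric.ball (((k:ℝ)*r) • v) (3*r) ∪ Metric.ball ((-((k:ℝ)*r)) • v) (3*r) with hD
  set b : ℕ → ℝ := fun k => if k ≤ 5 then 320*r else 108*r/(k:ℝ)^2 + 54*r^2/(k:ℝ) with hb
  have hbnn : ∀ k, 0 ≤ b k := by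
    intro k
    simp only [hb]
    split
    · positivity
    · positivity
  -- covering
  have hcover : {y : E | ∃ t ∈ Set.Ioo (-s/2) (s/2), ‖t • v - y‖ < 2 * r} ⊆
      ⋃ i : Fin (K+1), D i := by
    intro y hy
    obtain ⟨t, ht, hty⟩ := hy
    have htabs : |t| < s/2 := abs_lt.2 ⟨by linarith [ht.1], ht.2⟩
    set k : ℕ := ⌊|t|/r⌋₊ with hk
    have hkK : k ≤ K := by
      apply Nat.floor_mono
      rw [div_le_div_iff₀ hr0 (by positivity)]
      nlinarith [abs_nonneg t]
    have hklow : (k:ℝ) * r ≤ |t| := by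
      have h := Nat.floor_le (by positivity : (0:ℝ) ≤ |t|/r)
      calc (k:ℝ) * r ≤ (|t|/r) * r := by nlinarith
        _ = |t| := div_mul_cancel₀ _ hr0.ne'
    have hkhigh : |t| < ((k:ℝ)+1) * r := by
      have h := Nat.lt_floor_add_one (|t|/r)
      rw [div_lt_iff₀ hr0] at h
      exact_mod_cast h
    refine mem_iUnion.2 ⟨⟨k, by omega⟩, ?_⟩
    rcases le_or_gt 0 t with htp | htn
    · left
      rw [mem_ball, dist_eq_norm]
      have h1 : ‖t • v - ((k:ℝ)*r) • v‖ < r := by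
        rw [← sub_smul, norm_smul, hv, mul_one, Real.norm_eq_abs]
        rw [abs_of_nonneg htp] at hklow hkhigh
        rw [abs_of_nonneg (by linarith : 0 ≤ t - (k:ℝ)*r)]
        linarith
      calc ‖y - ((k:ℝ)*r) • v‖ ≤ ‖y - t • v‖ + ‖t • v - ((k:ℝ)*r) • v‖ :=
            norm_sub_le_norm_sub_add_norm_sub _ _ _
        _ < 2*r + r := by
            rw [norm_sub_rev] at hty
            linarith
        _ = 3*r := by ring
    · right
      rw [mem_ball, dist_eq_norm]
      have h1 : ‖t • v - (-((k:ℝ)*r)) • v‖ < r := by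
        rw [← sub_smul, norm_smul, hv, mul_one, Real.norm_eq_abs]
        rw [abs_of_neg htn] at hklow hkhigh
        rw [abs_of_nonpos (by linarith : t - (-((k:ℝ)*r)) ≤ 0)]
        linarith
      calc ‖y - (-((k:ℝ)*r)) • v‖ ≤ ‖y - t • v‖ + ‖t • v - (-((k:ℝ)*r)) • v‖ :=
            norm_sub_le_norm_sub_add_norm_sub _ _ _
        _ < 2*r + r := by
            rw [norm_sub_rev] at hty
            linarith
        _ = 3*r := by ring
  -- per-piece bound
  have hDk : ∀ k : ℕ, ∫⁻ y in D k, g y ≤ 2 * (ENNReal.ofReal (C * b k) * κ) := by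
    intro k
    have hn1 : ‖(((k:ℝ)*r)) • v‖ = (k:ℝ)*r := by
      rw [norm_smul, hv, mul_one, Real.norm_eq_abs, abs_of_nonneg (by positivity)]
    have hn2 : ‖(-((k:ℝ)*r)) • v‖ = (k:ℝ)*r := by
      rw [norm_smul, hv, mul_one, Real.norm_eq_abs, abs_neg, abs_of_nonneg (by positivity)]
    calc ∫⁻ y in D k, g y
        ≤ (∫⁻ y in Metric.ball (((k:ℝ)*r) • v) (3*r), g y) +
            ∫⁻ y in Metric.ball ((-((k:ℝ)*r)) • v) (3*r), g y := lintegral_union_le _ _ _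
      _ ≤ ENNReal.ofReal (C * b k) * κ + ENNReal.ofReal (C * b k) * κ :=
          add_le_add (oneBall hC hr0 hr1 k _ hn1) (oneBall hC hr0 hr1 k _ hn2)
      _ = 2 * (ENNReal.ofReal (C * b k) * κ) := (two_mul _).symm
  -- sum of b
  have hbsum : ∑ k ∈ Finset.range (K+1), b k ≤ 2082*r + 27*(r*s) := by
    have hble : ∀ k ∈ Finset.range (K+1), b k ≤
        (if k ≤ 5 then 320*r else 0) + (108*r) * (if 2 ≤ k then (((k:ℝ))^2)⁻¹ else 0)
          + 54*r^2 := by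
      intro k _
      simp only [hb]
      by_cases hk : k ≤ 5
      · rw [if_pos hk, if_pos hk]
        have : (0:ℝ) ≤ (108*r) * (if 2 ≤ k then (((k:ℝ))^2)⁻¹ else 0) := by
          split
          · positivity
          · simp
        nlinarith
      · rw [if_neg hk, if_neg hk, if_pos (by omega : 2 ≤ k)]
        push_neg at hk
        have hk1 : (1:ℝ) ≤ (k:ℝ) := by exact_mod_cast (by omega : 1 ≤ k)
        have h1 : 108*r/(k:ℝ)^2 = (108*r) * (((k:ℝ))^2)⁻¹ := by ring
        have h2 : 54*r^2/(k:ℝ) ≤ 54*r^2 := by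
          rw [div_le_iff₀ (by linarith)]
          nlinarith
        linarith [h1.le, h1.ge]
    calc ∑ k ∈ Finset.range (K+1), b k
        ≤ ∑ k ∈ Finset.range (K+1),
            ((if k ≤ 5 then 320*r else 0) + (108*r) * (if 2 ≤ k then (((k:ℝ))^2)⁻¹ else 0)
              + 54*r^2) := Finset.sum_le_sum hble
      _ = (∑ k ∈ Finset.range (K+1), (if k ≤ 5 then 320*r else 0))
            + (108*r) * (∑ k ∈ Finset.range (K+1), (if 2 ≤ k then (((k:ℝ))^2)⁻¹ else 0))
            + ((K:ℝ)+1) * (54*r^2) := by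
          rw [Finset.sum_add_distrib, Finset.sum_add_distrib, ← Finset.mul_sum,
            Finset.sum_const, Finset.card_range]
          push_cast
          ring
      _ ≤ 6 * (320*r) + (108*r) * 1 + ((K:ℝ)+1) * (54*r^2) := by
          have h1 := sum_ite_le (K+1) (320*r) (by positivity)
          have h2 := sum_inv_sq (K+1)
          have h3 : (0:ℝ) ≤ 108*r := by positivity
          nlinarith
      _ ≤ 2082*r + 27*(r*s) := by
          have hKle : (K:ℝ) ≤ s/(2*r) := Nat.floor_le (by positivity)
          have : ((K:ℝ)+1) * (54*r^2) ≤ 27*(r*s) + 54*r := by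
            have h4 : (K:ℝ)*r ≤ s/2 := by
              have he : (s/(2*r))*r = s/2 := by field_simp
              nlinarith
            nlinarith
          nlinarith
  -- final assembly
  calc ∫⁻ y in {y : E | ∃ t ∈ Set.Ioo (-s/2) (s/2), ‖t • v - y‖ < 2 * r}, g y
      ≤ ∫⁻ y in ⋃ i : Fin (K+1), D i, g y := lintegral_mono_set hcover
    _ ≤ ∑' i : Fin (K+1), ∫⁻ y in D i, g y := lintegral_iUnion_le _ _
    _ = ∑ k ∈ Finset.range (K+1), ∫⁻ y in D k, g y := by
        rw [tsum_fintype]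
        exact Fin.sum_univ_eq_sum_range (fun k => ∫⁻ y in D k, g y) (K+1)
    _ ≤ ∑ k ∈ Finset.range (K+1), 2 * (ENNReal.ofReal (C * b k) * κ) :=
        Finset.sum_le_sum fun k _ => hDk k
    _ = 2 * (ENNReal.ofReal (∑ k ∈ Finset.range (K+1), C * b k) * κ) := by
        rw [ENNReal.ofReal_sum_of_nonneg (fun k _ => mul_nonneg hC (hbnn k)),
          Finset.sum_mul, Finset.mul_sum]
    _ ≤ 2 * (ENNReal.ofReal (C * (2082*r + 27*(r*s))) * κ) := by
        apply mul_le_mul_right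
        apply mul_le_mul_left
        apply ENNReal.ofReal_le_ofReal
        rw [← Finset.mul_sum]
        exact mul_le_mul_of_nonneg_left hbsum hC
    _ = ENNReal.ofReal (C * (4164*r + 54*(r*s))) * κ := by
        rw [← mul_assoc, ← ENNReal.ofReal_ofNat 2, ← ENNReal.ofReal_mul (by norm_num)]
        congr 2
        ring
end S6

/-- In `d = 3`: the integral of the Green kernel `γ(x)=C(|x|^{-2}+|x|^{-1})` over the `2r`-tube
around the segment `{tv : -s/2<t<s/2}`, averaged against `e^{-s} ds`, is `O(r)`. -/

theorem stmt6 (C : ℝ) (hC : 0 ≤ C) :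
    ∃ C' : ℝ, 0 < C' ∧
      ∀ r : ℝ, r ∈ Set.Ioc (0:ℝ) 1 →
      ∀ v : EuclideanSpace ℝ (Fin 3), ‖v‖ = 1 →
        ∫ s in Set.Ioi (0:ℝ), Real.exp (-s) *
          (∫ y in {y : EuclideanSpace ℝ (Fin 3) |
              ∃ t ∈ Set.Ioo (-s/2) (s/2), ‖t • v - y‖ < 2 * r}, greenKernel C y)
          ≤ C' * r := by
  classical
  have hκ0 : (0:ℝ) ≤ (S6.κ).toReal := ENNReal.toReal_nonneg
  have hM : (0:ℝ) ≤ C * (S6.κ).toReal := mul_nonneg hC hκ0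
  refine ⟨4218 * (C * (S6.κ).toReal) + 1, by linarith, ?_⟩
  rintro r ⟨hr0, hr1⟩ v hv
  set M := C * (S6.κ).toReal with hMdef
  have hexp_int : IntegrableOn (fun x : ℝ => Real.exp (-x)) (Set.Ioi 0) := by
    have h := exp_neg_integrableOn_Ioi 0 (zero_lt_one)
    apply h.congr_fun _ measurableSet_Ioi
    intro x _
    norm_num
  have hxexp_int : IntegrableOn (fun x : ℝ => Real.exp (-x) * x) (Set.Ioi 0) := by
    have h := Real.GammaIntegral_convergent (by norm_num : (0:ℝ) < 2)
    apply h.congr_fun _ measurableSet_Ioi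
    intro x hx
    simp [show (2:ℝ) - 1 = 1 by norm_num, Real.rpow_one]
  have hexp_val : ∫ x in Set.Ioi (0:ℝ), Real.exp (-x) = 1 := integral_exp_neg_Ioi_zero
  have hxexp_val : ∫ x in Set.Ioi (0:ℝ), Real.exp (-x) * x = 1 := by
    have h := Real.Gamma_eq_integral (by norm_num : (0:ℝ) < 2)
    rw [Real.Gamma_two] at h
    rw [show (∫ x in Set.Ioi (0:ℝ), Real.exp (-x) * x)
        = ∫ x in Set.Ioi (0:ℝ), Real.exp (-x) * x ^ ((2:ℝ)-1) from ?_, ← h]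
    apply setIntegral_congr_fun measurableSet_Ioi
    intro x hx
    simp [show (2:ℝ) - 1 = 1 by norm_num, Real.rpow_one]
  have hφint : IntegrableOn
      (fun s : ℝ => 4164*M*r*Real.exp (-s) + 54*M*r*(Real.exp (-s)*s)) (Set.Ioi 0) :=
    (hexp_int.const_mul _).add (hxexp_int.const_mul _)
  have hF : ∀ s : ℝ, 0 < s →
      (∫ y in {y : EuclideanSpace ℝ (Fin 3) |
          ∃ t ∈ Set.Ioo (-s/2) (s/2), ‖t • v - y‖ < 2 * r}, greenKernel C y)
        ≤ M * (4164*r + 54*(r*s)) := by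
    intro s hs
    have hset := S6.tube hC hr0 hr1 hs v hv
    have heq : (∫ y in {y : EuclideanSpace ℝ (Fin 3) |
          ∃ t ∈ Set.Ioo (-s/2) (s/2), ‖t • v - y‖ < 2 * r}, greenKernel C y)
        = (∫⁻ y in {y : EuclideanSpace ℝ (Fin 3) |
          ∃ t ∈ Set.Ioo (-s/2) (s/2), ‖t • v - y‖ < 2 * r},
            ENNReal.ofReal (greenKernel C y)).toReal :=
      integral_eq_lintegral_of_nonneg_ae (ae_of_all _ (S6.gk_nonneg C hC))
        ((S6.gk_meas C).aestronglyMeasurable)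
    rw [heq]
    have hne : ENNReal.ofReal (C*(4164*r + 54*(r*s))) * S6.κ ≠ ⊤ :=
      ENNReal.mul_ne_top ENNReal.ofReal_ne_top S6.κ_ne_top
    have h2 := ENNReal.toReal_mono hne hset
    rw [ENNReal.toReal_mul, ENNReal.toReal_ofReal
      (mul_nonneg hC (by positivity))] at h2
    calc _ ≤ C*(4164*r + 54*(r*s)) * (S6.κ).toReal := h2
      _ = M * (4164*r + 54*(r*s)) := by rw [hMdef]; ring
  refine le_trans (integral_mono_of_nonneg ?_ hφint ?_) ?_
  · exact ae_of_all _ fun s =>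
      mul_nonneg (Real.exp_nonneg _) (integral_nonneg fun y => S6.gk_nonneg C hC y)
  · refine (ae_restrict_iff' measurableSet_Ioi).mpr (ae_of_all _ ?_)
    intro s hs
    have h1 := hF s hs
    calc Real.exp (-s) * _ ≤ Real.exp (-s) * (M * (4164*r + 54*(r*s))) :=
          mul_le_mul_of_nonneg_left h1 (Real.exp_nonneg _)
      _ = 4164*M*r*Real.exp (-s) + 54*M*r*(Real.exp (-s)*s) := by ring
  · rw [integral_add (hexp_int.const_mul _) (hxexp_int.const_mul _),
      integral_const_mul, integral_const_mul, hexp_val, hxexp_val]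
    nlinarith [hM, hr0.le]
end

section
/- Let $d = 3$ and $\gamma(x) = C(|x|^{-d+1} + |x|^{-d+2})$. There exists a constant $C' < \infty$ such that for all $r \in (0,1]$ and all unit vectors $v \in S^{d-1}$, $r^{-1} \int_0^\infty e^{-s} \int_{\mathbb{R}^d} \gamma(y)\, \mathbf{1}\{|sv - y| < 3r\} \, dy \, ds \le C' r$. -/
open MeasureTheory Set

/-! For `C = 1` (the statement is linear in `C`), multiplying the inner integral `G(s)` over
`B(s • v, 3r)` by `e^{-s}` gives at most `K r³ / (s + r)²` for all `s > 0`. For `s ≤ 6r` the ball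
lies in `B(0, 9r)`, over which `∫ γ = O(r)` by polar coordinates. For `s > 6r` the kernel is at most
its value at radius `t = s - 3r ≥ s / 2` on the ball, so `G(s) = O(r³ (t⁻² + t⁻¹))`, and
`e^{-s} ≤ t⁻¹` turns the `t⁻¹` term into `t⁻²`. Since `∫₀^∞ (s + r)⁻² ds = r⁻¹`, the double
integral is `O(r²)`. -/

open Metric Module Filter Topology

section RadialPower

variable {E : Type*} [NormedAddCommGroup E] [NormedSpace ℝ E] [FiniteDimensional ℝ E]
  [MeasurableSpace E] [BorelSpace E] [Nontrivial E] (μ : Measure E) [μ.IsAddHaarMeasure]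

lemma integrableOn_ball_norm_rpow_neg {α : ℝ} (hα : α < finrank ℝ E) (R : ℝ) :
    IntegrableOn (fun x : E => ‖x‖ ^ (-α)) (ball 0 R) μ :=
  integrableOn_ball_of_norm_le_rpow (C := 1) finrank_pos hα
    (ae_of_all _ fun x => by simp [abs_of_nonneg (Real.rpow_nonneg (norm_nonneg x) _)])
    (measurable_norm.pow_const _).aestronglyMeasurable

lemma integral_ball_norm_rpow_neg {α R : ℝ} (hα : α < finrank ℝ E) (hR : 0 ≤ R) :
    ∫ x in ball (0:E) R, ‖x‖ ^ (-α) ∂μ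
      = finrank ℝ E * μ.real (ball 0 1) * (R ^ (finrank ℝ E - α) / (finrank ℝ E - α)) := by
  have hind : (ball (0:E) R).indicator (fun x => ‖x‖ ^ (-α))
      = fun x => (Iio R).indicator (· ^ (-α)) ‖x‖ := by
    ext x; by_cases h : ‖x‖ < R <;> simp [h]
  have hradial : ∫ y in Ioi (0:ℝ), y ^ (finrank ℝ E - 1) • (Iio R).indicator (· ^ (-α)) y
      = ∫ y in (0:ℝ)..R, y ^ ((finrank ℝ E : ℝ) - 1 - α) := by
    simp_rw [← indicator_smul_apply (Iio R) (fun y : ℝ => y ^ (finrank ℝ E - 1))]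
    rw [setIntegral_indicator measurableSet_Iio, Ioi_inter_Iio, intervalIntegral.integral_of_le hR,
      integral_Ioc_eq_integral_Ioo]
    refine setIntegral_congr_fun measurableSet_Ioo fun y hy => ?_
    rw [smul_eq_mul, ← Real.rpow_natCast, Nat.cast_sub finrank_pos, ← Real.rpow_add hy.1]
    simp only [Nat.cast_one, sub_eq_add_neg]
  rw [← integral_indicator measurableSet_ball, hind, integral_fun_norm_addHaar, hradial,
    integral_rpow (Or.inl (by linarith)), Real.zero_rpow (by linarith)]
  simp only [nsmul_eq_mul, smul_eq_mul, sub_zero]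
  ring_nf

lemma measureReal_ball_eq_pow_mul (x : E) {r : ℝ} (hr : 0 ≤ r) :
    μ.real (ball x r) = r ^ finrank ℝ E * μ.real (ball 0 1) := by
  rw [measureReal_def, measureReal_def, μ.addHaar_ball x hr, ENNReal.toReal_mul,
    ENNReal.toReal_ofReal (by positivity)]

end RadialPower

lemma integral_Ioi_inv_add_sq {a : ℝ} (ha : 0 < a) :
    IntegrableOn (fun s : ℝ => ((s + a) ^ 2)⁻¹) (Ioi 0) ∧
      ∫ s in Ioi (0:ℝ), ((s + a) ^ 2)⁻¹ = a⁻¹ := by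
  have hderiv : ∀ s ∈ Ici (0:ℝ), HasDerivAt (fun s => -(s + a)⁻¹) ((s + a) ^ 2)⁻¹ s := by
    intro s hs
    have hsa : s + a ≠ 0 := by linarith [mem_Ici.mp hs]
    refine (((hasDerivAt_id' s).add_const a).inv hsa).neg.congr_deriv ?_
    rw [neg_div, neg_neg, one_div]
  have hnonneg : ∀ s ∈ Ioi (0:ℝ), 0 ≤ ((s + a) ^ 2)⁻¹ := fun s _ => by positivity
  have hlim : Tendsto (fun s : ℝ => -(s + a)⁻¹) atTop (𝓝 0) := by
    simpa using (tendsto_inv_atTop_zero.comp (tendsto_atTop_add_const_right _ a tendsto_id)).neg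
  refine ⟨integrableOn_Ioi_deriv_of_nonneg' hderiv hnonneg hlim, ?_⟩
  rw [integral_Ioi_of_hasDerivAt_of_nonneg' hderiv hnonneg hlim]
  simp

local notation "ℝ³" => EuclideanSpace ℝ (Fin 3)

lemma greenKernel_one : greenKernel 1 = fun x : ℝ³ => ‖x‖ ^ (-(2:ℝ)) + ‖x‖ ^ (-(1:ℝ)) := by
  ext x
  rw [greenKernel, one_mul]

lemma greenKernel_eq_mul (C : ℝ) (x : ℝ³) : greenKernel C x = C * greenKernel 1 x := by
  simp [greenKernel]

lemma greenKernel_one_nonneg (x : ℝ³) : 0 ≤ greenKernel 1 x := by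
  unfold greenKernel
  positivity

lemma greenKernel_one_le_of_le_norm {x : ℝ³} {ρ : ℝ} (hρ : 0 < ρ) (hx : ρ ≤ ‖x‖) :
    greenKernel 1 x ≤ (ρ ^ 2)⁻¹ + ρ⁻¹ := by
  have h2 : ‖x‖ ^ (-(2:ℝ)) ≤ ρ ^ (-(2:ℝ)) := Real.rpow_le_rpow_of_nonpos hρ hx (by norm_num)
  have h1 : ‖x‖ ^ (-(1:ℝ)) ≤ ρ ^ (-(1:ℝ)) := Real.rpow_le_rpow_of_nonpos hρ hx (by norm_num)
  rw [Real.rpow_neg hρ.le, Real.rpow_two] at h2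
  rw [Real.rpow_neg_one ρ] at h1
  rw [greenKernel_one]
  exact add_le_add h2 h1

lemma integrableOn_greenKernel_one_ball (R : ℝ) : IntegrableOn (greenKernel 1) (ball 0 R) := by
  have h2 := integrableOn_ball_norm_rpow_neg volume (E := ℝ³) (α := 2) (by norm_num) R
  have h1 := integrableOn_ball_norm_rpow_neg volume (E := ℝ³) (α := 1) (by norm_num) R
  rw [greenKernel_one]
  exact h2.add h1

lemma integral_greenKernel_one_ball {R : ℝ} (hR : 0 ≤ R) :
    ∫ x in ball (0:ℝ³) R, greenKernel 1 x = 3 * volume.real (ball (0:ℝ³) 1) * (R + R ^ 2 / 2) := by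
  have h2 := integrableOn_ball_norm_rpow_neg volume (E := ℝ³) (α := 2) (by norm_num) R
  have h1 := integrableOn_ball_norm_rpow_neg volume (E := ℝ³) (α := 1) (by norm_num) R
  rw [greenKernel_one, integral_add h2 h1, integral_ball_norm_rpow_neg _ (by norm_num) hR,
    integral_ball_norm_rpow_neg _ (by norm_num) hR, finrank_euclideanSpace_fin]
  norm_num
  ring

lemma integral_greenKernel_one_ball_le (x : ℝ³) {ρ : ℝ} (hρ : 0 ≤ ρ) :
    ∫ y in ball x ρ, greenKernel 1 y
      ≤ 3 * volume.real (ball (0:ℝ³) 1) * ((‖x‖ + ρ) + (‖x‖ + ρ) ^ 2 / 2) := by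
  rw [← integral_greenKernel_one_ball (by positivity)]
  exact setIntegral_mono_set (integrableOn_greenKernel_one_ball _)
    (ae_of_all _ greenKernel_one_nonneg)
    (ball_subset_ball' (by rw [dist_zero_right, add_comm])).eventuallyLE

lemma integral_greenKernel_one_ball_le_of_lt {x : ℝ³} {ρ : ℝ} (hρ : 0 ≤ ρ) (hx : ρ < ‖x‖) :
    ∫ y in ball x ρ, greenKernel 1 y
      ≤ ρ ^ 3 * volume.real (ball (0:ℝ³) 1) * (((‖x‖ - ρ) ^ 2)⁻¹ + (‖x‖ - ρ)⁻¹) := by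
  have hbound : ∀ y ∈ ball x ρ, greenKernel 1 y ≤ ((‖x‖ - ρ) ^ 2)⁻¹ + (‖x‖ - ρ)⁻¹ := by
    intro y hy
    refine greenKernel_one_le_of_le_norm (sub_pos.2 hx) ?_
    have := norm_sub_norm_le x y
    rw [← dist_eq_norm] at this
    linarith [mem_ball'.mp hy]
  calc ∫ y in ball x ρ, greenKernel 1 y
      ≤ ∫ _ in ball x ρ, ((‖x‖ - ρ) ^ 2)⁻¹ + (‖x‖ - ρ)⁻¹ :=
        integral_mono_of_nonneg (ae_of_all _ greenKernel_one_nonneg)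
          (integrableOn_const measure_ball_lt_top.ne)
          ((ae_restrict_iff' measurableSet_ball).2 (ae_of_all _ hbound))
    _ = _ := by
        rw [setIntegral_const, measureReal_ball_eq_pow_mul _ _ hρ, finrank_euclideanSpace_fin,
          smul_eq_mul]

lemma exp_neg_mul_integral_greenKernel_one_ball_le {r s : ℝ} (hr : 0 < r) (hr1 : r ≤ 1)
    (hs : 0 < s) {v : ℝ³} (hv : ‖v‖ = 1) :
    Real.exp (-s) * ∫ y in ball (s • v) (3 * r), greenKernel 1 y
      ≤ 7500 * volume.real (ball (0:ℝ³) 1) * r ^ 3 * ((s + r) ^ 2)⁻¹ := by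
  set V := volume.real (ball (0:ℝ³) 1)
  have hV : 0 ≤ V := measureReal_nonneg
  have hsv : ‖s • v‖ = s := by rw [norm_smul, hv, Real.norm_of_nonneg hs.le, mul_one]
  have hexp_le_one : Real.exp (-s) ≤ 1 := Real.exp_le_one_iff.mpr (by linarith)
  have hG : 0 ≤ ∫ y in ball (s • v) (3 * r), greenKernel 1 y :=
    integral_nonneg greenKernel_one_nonneg
  rw [← div_eq_mul_inv, le_div_iff₀ (by positivity)]
  rcases le_or_gt s (6 * r) with hnear | hfar
  · have h := integral_greenKernel_one_ball_le (s • v) (ρ := 3 * r) (by positivity)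
    rw [hsv] at h
    calc Real.exp (-s) * (∫ y in ball (s • v) (3 * r), greenKernel 1 y) * (s + r) ^ 2
        ≤ (3 * V * (99 / 2 * r)) * (49 * r ^ 2) := by
          gcongr ?_ * ?_
          · refine (mul_le_of_le_one_left hG hexp_le_one).trans (h.trans ?_)
            gcongr
            nlinarith
          · nlinarith
      _ ≤ 7500 * V * r ^ 3 := by nlinarith [mul_nonneg hV (pow_nonneg hr.le 3)]
  · have h := integral_greenKernel_one_ball_le_of_lt (x := s • v) (ρ := 3 * r) (by positivity)
      (by rw [hsv]; linarith)
    rw [hsv] at h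
    set t := s - 3 * r
    have ht : 0 < t := by linarith
    have hexp_le_inv : Real.exp (-s) ≤ t⁻¹ := by
      rw [Real.exp_neg]
      exact inv_anti₀ ht (by linarith [Real.add_one_le_exp s])
    have hdecay : Real.exp (-s) * ((t ^ 2)⁻¹ + t⁻¹) ≤ 2 * (t ^ 2)⁻¹ := by
      have h1 : Real.exp (-s) * (t ^ 2)⁻¹ ≤ (t ^ 2)⁻¹ :=
        mul_le_of_le_one_left (by positivity) hexp_le_one
      have h2 : Real.exp (-s) * t⁻¹ ≤ (t ^ 2)⁻¹ := by
        rw [sq, mul_inv]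
        exact mul_le_mul_of_nonneg_right hexp_le_inv (by positivity)
      linarith
    have hratio : (t ^ 2)⁻¹ * (s + r) ^ 2 ≤ 49 / 9 := by
      rw [inv_mul_le_iff₀ (by positivity)]
      nlinarith
    calc Real.exp (-s) * (∫ y in ball (s • v) (3 * r), greenKernel 1 y) * (s + r) ^ 2
        ≤ Real.exp (-s) * ((3 * r) ^ 3 * V * ((t ^ 2)⁻¹ + t⁻¹)) * (s + r) ^ 2 := by gcongr
      _ = 27 * V * r ^ 3 * (Real.exp (-s) * ((t ^ 2)⁻¹ + t⁻¹)) * (s + r) ^ 2 := by ring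
      _ ≤ 27 * V * r ^ 3 * (2 * (t ^ 2)⁻¹) * (s + r) ^ 2 := by gcongr
      _ = 54 * V * r ^ 3 * ((t ^ 2)⁻¹ * (s + r) ^ 2) := by ring
      _ ≤ 54 * V * r ^ 3 * (49 / 9) := by gcongr
      _ ≤ 7500 * V * r ^ 3 := by nlinarith [mul_nonneg hV (pow_nonneg hr.le 3)]

lemma integral_exp_neg_mul_integral_greenKernel_one_ball_le {r : ℝ} (hr : 0 < r) (hr1 : r ≤ 1)
    {v : ℝ³} (hv : ‖v‖ = 1) :
    ∫ s in Ioi (0:ℝ), Real.exp (-s) * ∫ y in ball (s • v) (3 * r), greenKernel 1 y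
      ≤ 7500 * volume.real (ball (0:ℝ³) 1) * r ^ 2 := by
  obtain ⟨hint, hval⟩ := integral_Ioi_inv_add_sq hr
  calc ∫ s in Ioi (0:ℝ), Real.exp (-s) * ∫ y in ball (s • v) (3 * r), greenKernel 1 y
      ≤ ∫ s in Ioi (0:ℝ), 7500 * volume.real (ball (0:ℝ³) 1) * r ^ 3 * ((s + r) ^ 2)⁻¹ :=
        integral_mono_of_nonneg
          (ae_of_all _ fun _ =>
            mul_nonneg (Real.exp_pos _).le (integral_nonneg greenKernel_one_nonneg))
          (hint.const_mul _)
          ((ae_restrict_iff' measurableSet_Ioi).2 (ae_of_all _ fun _ hs =>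
            exp_neg_mul_integral_greenKernel_one_ball_le hr hr1 hs hv))
    _ = _ := by
        rw [integral_const_mul, hval]
        field_simp

theorem stmt7_general (C : ℝ) :
    ∃ C' : ℝ, 0 < C' ∧
      ∀ r : ℝ, r ∈ Set.Ioc (0:ℝ) 1 →
      ∀ v : EuclideanSpace ℝ (Fin 3), ‖v‖ = 1 →
        r⁻¹ * ∫ s in Set.Ioi (0:ℝ), Real.exp (-s) *
          (∫ y in {y : EuclideanSpace ℝ (Fin 3) | ‖s • v - y‖ < 3 * r}, greenKernel C y)
          ≤ C' * r := by
  set V := volume.real (ball (0:ℝ³) 1)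
  have hV : 0 < V := ENNReal.toReal_pos (measure_ball_pos _ _ one_pos).ne' measure_ball_lt_top.ne
  refine ⟨(|C| + 1) * (7500 * V), by positivity, ?_⟩
  rintro r ⟨hr, hr1⟩ v hv
  have hball (s : ℝ) : {y : ℝ³ | ‖s • v - y‖ < 3 * r} = ball (s • v) (3 * r) := by
    ext y
    rw [mem_ball', dist_eq_norm]
    rfl
  set X := ∫ s in Ioi (0:ℝ), Real.exp (-s) * ∫ y in ball (s • v) (3 * r), greenKernel 1 y
  have hX0 : 0 ≤ X := setIntegral_nonneg measurableSet_Ioi fun s _ =>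
    mul_nonneg (Real.exp_pos _).le (integral_nonneg greenKernel_one_nonneg)
  have hX := integral_exp_neg_mul_integral_greenKernel_one_ball_le hr hr1 hv
  have hscale : (∫ s in Ioi (0:ℝ), Real.exp (-s) *
      ∫ y in {y : ℝ³ | ‖s • v - y‖ < 3 * r}, greenKernel C y) = C * X := by
    simp_rw [hball, greenKernel_eq_mul C, integral_const_mul, mul_left_comm (Real.exp _) C]
    exact integral_const_mul C _
  rw [hscale]
  calc r⁻¹ * (C * X) ≤ r⁻¹ * ((|C| + 1) * (7500 * V * r ^ 2)) := by
        gcongr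
        linarith [le_abs_self C]
    _ = (|C| + 1) * (7500 * V) * r := by
        field_simp

/-- In `d = 3`: `r⁻¹ ∫₀^∞ e^{-s} ∫_{|sv-y|<3r} γ(y) dy ds ≤ C' r`. -/
theorem stmt7 (C : ℝ) (hC : 0 ≤ C) :
    ∃ C' : ℝ, 0 < C' ∧
      ∀ r : ℝ, r ∈ Set.Ioc (0:ℝ) 1 →
      ∀ v : EuclideanSpace ℝ (Fin 3), ‖v‖ = 1 →
        r⁻¹ * ∫ s in Set.Ioi (0:ℝ), Real.exp (-s) *
          (∫ y in {y : EuclideanSpace ℝ (Fin 3) | ‖s • v - y‖ < 3 * r}, greenKernel C y)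
          ≤ C' * r :=
  stmt7_general C
end

section
/- Let $d = 3$, $\gamma(x) = C(|x|^{-d+1} + |x|^{-d+2})$, and let $r \in (0,1]$, $T \ge 1$ with $rT \le 1$. Then there is a constant $C' < \infty$, independent of $r$ and $T$, such that $r^{-1-d} \int_{\mathbb{R}^d} \Big( \int_{\mathbb{R}^d} \gamma(x)\,\mathbf{1}\{|x| < T\}\,\mathbf{1}\{|x - z| < 3r\}\, dx \Big)^2 dz \le C' \big(r + r^{d-1} T\big) \le 2 C' r$. -/
/-!
Write `F(z)` for the mass of `γ` on `B(0, T) ∩ B(z, ρ)`, with `ρ = 3r`. Three pointwise bounds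
suffice: for `|z| < 2ρ`, `F(z)` is at most the mass of `γ` on `B(0, 3ρ)`, which is `O(ρ)`; for
`|z| ≥ 2ρ`, `γ ≤ γ(|z|/2)` on `B(z, ρ)`, so `F(z) = O(ρ³ (|z|⁻² + |z|⁻¹))`; and `F(z) = 0` once
`|z| ≥ T + ρ`. Squaring and integrating in polar coordinates, the ball `B(0, 2ρ)` and the tail of
`|z|⁻⁴` contribute `O(ρ⁵)`, and `|z|⁻²` over `B(0, T + ρ)` contributes `O(ρ⁶ T)`.
-/

open MeasureTheory Set

open Metric Real

theorem indicator_norm_preimage {E : Type*} [Norm E] (S : Set ℝ) (f : ℝ → ℝ) :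
    ((‖·‖) ⁻¹' S).indicator (fun x : E => f ‖x‖) = fun x => S.indicator f ‖x‖ :=
  funext fun _ => indicator_comp_right _

theorem ball_zero_eq_norm_preimage {E : Type*} [SeminormedAddGroup E] (R : ℝ) :
    ball (0 : E) R = (‖·‖) ⁻¹' Iio R := by
  ext; simp

theorem compl_ball_zero_eq_norm_preimage {E : Type*} [SeminormedAddGroup E] (a : ℝ) :
    (ball (0 : E) a)ᶜ = (‖·‖) ⁻¹' Ici a := by
  ext; simp

theorem pow_pred_mul_rpow {k : ℕ} (hk : 0 < k) {y : ℝ} (hy : 0 < y) (p : ℝ) :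
    y ^ (k - 1) * y ^ p = y ^ ((k : ℝ) - 1 + p) := by
  rw [← rpow_natCast, ← rpow_add hy, Nat.cast_pred hk]

section Radial

variable {E : Type*} [NormedAddCommGroup E] [NormedSpace ℝ E] [FiniteDimensional ℝ E]
  [MeasurableSpace E] [BorelSpace E] [Nontrivial E] (μ : Measure E) [μ.IsAddHaarMeasure]

local notation "dim" => Module.finrank ℝ E

theorem setIntegral_comp_norm_preimage {S : Set ℝ} (hS : MeasurableSet S) (f : ℝ → ℝ) :
    ∫ x in (‖·‖) ⁻¹' S, f ‖x‖ ∂μ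
      = dim * μ.real (ball 0 1) * ∫ y in Ioi 0 ∩ S, y ^ (dim - 1) * f y := by
  rw [← integral_indicator (measurable_norm hS), indicator_norm_preimage,
    integral_fun_norm_addHaar μ (S.indicator f), ← setIntegral_indicator hS, nsmul_eq_mul,
    smul_eq_mul, mul_assoc]
  simp only [smul_eq_mul, indicator_mul_right]

theorem integrableOn_comp_norm_preimage_iff {S : Set ℝ} (hS : MeasurableSet S) {f : ℝ → ℝ} :
    IntegrableOn (fun x => f ‖x‖) ((‖·‖) ⁻¹' S) μ
      ↔ IntegrableOn (fun y => y ^ (dim - 1) * f y) (Ioi 0 ∩ S) := by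
  rw [← integrable_indicator_iff (measurable_norm hS), indicator_norm_preimage,
    integrable_fun_norm_addHaar μ, IntegrableOn, IntegrableOn, inter_comm,
    ← Measure.restrict_restrict hS]
  refine Iff.trans ?_ (integrable_indicator_iff hS)
  simp only [smul_eq_mul, ← indicator_mul_right S (fun y => y ^ (dim - 1)) f]

theorem integrableOn_norm_rpow_ball {p : ℝ} (hp : -(dim : ℝ) < p) (R : ℝ) :
    IntegrableOn (fun x => ‖x‖ ^ p) (ball (0 : E) R) μ :=
  integrableOn_ball_of_norm_le_rpow Module.finrank_pos (C := 1) (α := -p) (by linarith)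
    (.of_forall fun x => by simp [abs_of_nonneg (rpow_nonneg (norm_nonneg x) p)])
    (measurable_norm.pow_const p).aestronglyMeasurable

theorem integral_norm_rpow_ball {p R : ℝ} (hp : -(dim : ℝ) < p) (hR : 0 ≤ R) :
    ∫ x in ball (0 : E) R, ‖x‖ ^ p ∂μ
      = dim * μ.real (ball 0 1) * (R ^ (dim + p) / (dim + p)) := by
  rw [ball_zero_eq_norm_preimage, setIntegral_comp_norm_preimage μ measurableSet_Iio (· ^ p),
    Ioi_inter_Iio, setIntegral_congr_fun measurableSet_Ioo
      fun y hy => pow_pred_mul_rpow Module.finrank_pos hy.1 p, ← integral_Ioc_eq_integral_Ioo,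
    ← intervalIntegral.integral_of_le hR, integral_rpow (Or.inl (by linarith)),
    zero_rpow (by linarith)]
  ring_nf

theorem integrableOn_norm_rpow_compl_ball {p a : ℝ} (hp : p < -(dim : ℝ)) (ha : 0 < a) :
    IntegrableOn (fun x => ‖x‖ ^ p) (ball (0 : E) a)ᶜ μ := by
  rw [compl_ball_zero_eq_norm_preimage,
    integrableOn_comp_norm_preimage_iff μ measurableSet_Ici (f := fun y => y ^ p),
    inter_eq_right.2 (Ici_subset_Ioi.2 ha), integrableOn_Ici_iff_integrableOn_Ioi]
  exact (integrableOn_Ioi_rpow_of_lt (a := (dim : ℝ) - 1 + p) (by linarith) ha).congr_fun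
    (fun y hy => (pow_pred_mul_rpow Module.finrank_pos (ha.trans hy) p).symm) measurableSet_Ioi

theorem integral_norm_rpow_compl_ball {p a : ℝ} (hp : p < -(dim : ℝ)) (ha : 0 < a) :
    ∫ x in (ball (0 : E) a)ᶜ, ‖x‖ ^ p ∂μ
      = dim * μ.real (ball 0 1) * (-a ^ (dim + p) / (dim + p)) := by
  rw [compl_ball_zero_eq_norm_preimage, setIntegral_comp_norm_preimage μ measurableSet_Ici (· ^ p),
    inter_eq_right.2 (Ici_subset_Ioi.2 ha), integral_Ici_eq_integral_Ioi,
    setIntegral_congr_fun measurableSet_Ioi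
      fun y hy => pow_pred_mul_rpow Module.finrank_pos (ha.trans hy) p,
    integral_Ioi_rpow_of_lt (by linarith) ha]
  ring_nf

end Radial

local notation "ℝ³" => EuclideanSpace ℝ (Fin 3)

local notation "ω₃" => volume.real (ball (0 : ℝ³) 1)

theorem volume_real_ball_eq_pow_mul (z : ℝ³) {ρ : ℝ} (hρ : 0 ≤ ρ) :
    volume.real (ball z ρ) = ρ ^ 3 * ω₃ := by
  rw [measureReal_def, Measure.addHaar_ball volume z hρ, finrank_euclideanSpace_fin,
    ENNReal.toReal_mul, ENNReal.toReal_ofReal (by positivity), measureReal_def]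

theorem greenKernel_nonneg {C : ℝ} (hC : 0 ≤ C) (x : ℝ³) : 0 ≤ greenKernel C x := by
  unfold greenKernel
  positivity

theorem greenKernel_le_of_le_norm {C a : ℝ} (hC : 0 ≤ C) (ha : 0 < a) {x : ℝ³} (hx : a ≤ ‖x‖) :
    greenKernel C x ≤ C * (a ^ (-(2:ℝ)) + a ^ (-(1:ℝ))) := by
  unfold greenKernel
  have hle (k : ℝ) (hk : 0 ≤ k) : ‖x‖ ^ (-k) ≤ a ^ (-k) :=
    rpow_le_rpow_of_nonpos ha hx (neg_nonpos.2 hk)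
  exact mul_le_mul_of_nonneg_left (add_le_add (hle 2 zero_le_two) (hle 1 zero_le_one)) hC

theorem integrableOn_greenKernel_ball (C R : ℝ) : IntegrableOn (greenKernel C) (ball 0 R) :=
  ((integrableOn_norm_rpow_ball volume (by norm_num) R).add
    (integrableOn_norm_rpow_ball volume (by norm_num) R)).const_mul C

theorem integral_greenKernel_ball (C : ℝ) {R : ℝ} (hR : 0 ≤ R) :
    ∫ x in ball 0 R, greenKernel C x = C * ω₃ * (3 * R + 3 * R ^ 2 / 2) := by
  unfold greenKernel
  rw [integral_const_mul, integral_add (integrableOn_norm_rpow_ball volume (by norm_num) R)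
      (integrableOn_norm_rpow_ball volume (by norm_num) R),
    integral_norm_rpow_ball volume (by norm_num) hR,
    integral_norm_rpow_ball volume (by norm_num) hR, finrank_euclideanSpace_fin]
  norm_num
  ring

noncomputable def smearedKernel (C T ρ : ℝ) (z : ℝ³) : ℝ :=
  ∫ x in ball 0 T ∩ ball z ρ, greenKernel C x

theorem smearedKernel_nonneg {C : ℝ} (hC : 0 ≤ C) (T ρ : ℝ) (z : ℝ³) :
    0 ≤ smearedKernel C T ρ z :=
  setIntegral_nonneg (measurableSet_ball.inter measurableSet_ball)
    fun x _ => greenKernel_nonneg hC x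

theorem smearedKernel_le_integral_ball {C T ρ R : ℝ} (hC : 0 ≤ C) {z : ℝ³} (h : ‖z‖ + ρ ≤ R) :
    smearedKernel C T ρ z ≤ ∫ x in ball 0 R, greenKernel C x :=
  setIntegral_mono_set (integrableOn_greenKernel_ball C R)
    (.of_forall fun x => greenKernel_nonneg hC x)
    (inter_subset_right.trans (ball_subset_ball' (by simpa [add_comm] using h))).eventuallyLE

theorem smearedKernel_le_of_two_mul_le_norm {C ρ : ℝ} (hC : 0 ≤ C) (hρ : 0 < ρ) (T : ℝ)
    {z : ℝ³} (hz : 2 * ρ ≤ ‖z‖) :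
    smearedKernel C T ρ z
      ≤ ρ ^ 3 * ω₃ * (C * ((‖z‖ / 2) ^ (-(2:ℝ)) + (‖z‖ / 2) ^ (-(1:ℝ)))) := by
  have hbound : ∀ x ∈ ball 0 T ∩ ball z ρ,
      ‖greenKernel C x‖ ≤ C * ((‖z‖ / 2) ^ (-(2:ℝ)) + (‖z‖ / 2) ^ (-(1:ℝ))) := by
    rintro x ⟨-, hxz⟩
    rw [Real.norm_of_nonneg (greenKernel_nonneg hC x)]
    have := norm_sub_norm_le z x
    rw [mem_ball', dist_eq_norm] at hxz
    exact greenKernel_le_of_le_norm hC (by linarith) (by linarith)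
  calc smearedKernel C T ρ z ≤ ‖smearedKernel C T ρ z‖ := le_norm_self _
    _ ≤ C * ((‖z‖ / 2) ^ (-(2:ℝ)) + (‖z‖ / 2) ^ (-(1:ℝ))) * volume.real (ball 0 T ∩ ball z ρ) :=
      norm_setIntegral_le_of_norm_le_const
        ((measure_mono inter_subset_right).trans_lt measure_ball_lt_top) hbound
    _ ≤ C * ((‖z‖ / 2) ^ (-(2:ℝ)) + (‖z‖ / 2) ^ (-(1:ℝ))) * volume.real (ball z ρ) := by
      gcongr
      exacts [measure_ball_lt_top.ne, inter_subset_right]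
    _ = _ := by rw [volume_real_ball_eq_pow_mul z hρ.le]; ring

theorem smearedKernel_eq_zero_of_le_norm {C T ρ : ℝ} {z : ℝ³} (hz : T + ρ ≤ ‖z‖) :
    smearedKernel C T ρ z = 0 := by
  rw [smearedKernel, (ball_disjoint_ball (by simpa using hz)).inter_eq, Measure.restrict_empty,
    integral_zero_measure]

theorem sq_smearedKernel_le_of_two_mul_le_norm {C ρ : ℝ} (hC : 0 ≤ C) (hρ : 0 < ρ) (T : ℝ)
    {z : ℝ³} (hz : 2 * ρ ≤ ‖z‖) :
    smearedKernel C T ρ z ^ 2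
      ≤ 32 * (ρ ^ 3 * ω₃ * C) ^ 2 * (‖z‖ ^ (-(4:ℝ)) + ‖z‖ ^ (-(2:ℝ))) := by
  have hz0 : 0 < ‖z‖ := by linarith
  have hdecay := smearedKernel_le_of_two_mul_le_norm hC hρ T hz
  simp only [rpow_neg hz0.le, rpow_neg (half_pos hz0).le, rpow_ofNat, rpow_one] at hdecay ⊢
  set u := ‖z‖⁻¹
  have hu : 0 ≤ u := by positivity
  have hsplit : ((‖z‖ / 2) ^ 2)⁻¹ + (‖z‖ / 2)⁻¹ = 4 * u ^ 2 + 2 * u := by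
    simp only [u]; field_simp; ring
  rw [hsplit] at hdecay
  calc smearedKernel C T ρ z ^ 2 ≤ (ρ ^ 3 * ω₃ * (C * (4 * u ^ 2 + 2 * u))) ^ 2 :=
        pow_le_pow_left₀ (smearedKernel_nonneg hC T ρ z) hdecay 2
    _ = (ρ ^ 3 * ω₃ * C) ^ 2 * (4 * u ^ 2 + 2 * u) ^ 2 := by ring
    _ ≤ (ρ ^ 3 * ω₃ * C) ^ 2 * (32 * ((‖z‖ ^ 4)⁻¹ + (‖z‖ ^ 2)⁻¹)) := by
        gcongr
        simp only [u, ← inv_pow]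
        nlinarith [sq_nonneg (u ^ 2 - u), pow_nonneg hu 3]
    _ = _ := by ring

noncomputable def smearedKernelMajorant (C T ρ : ℝ) (z : ℝ³) : ℝ :=
  (ball 0 (2 * ρ)).indicator (fun _ => (∫ x in ball 0 (3 * ρ), greenKernel C x) ^ 2) z
    + 32 * (ρ ^ 3 * ω₃ * C) ^ 2 * ((ball 0 (2 * ρ))ᶜ.indicator (fun z => ‖z‖ ^ (-(4:ℝ))) z
      + (ball 0 (T + ρ)).indicator (fun z => ‖z‖ ^ (-(2:ℝ))) z)

theorem sq_smearedKernel_le_majorant {C ρ : ℝ} (hC : 0 ≤ C) (hρ : 0 < ρ) (T : ℝ) (z : ℝ³) :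
    smearedKernel C T ρ z ^ 2 ≤ smearedKernelMajorant C T ρ z := by
  have hnonneg : 0 ≤ (ball 0 (2 * ρ))ᶜ.indicator (fun z : ℝ³ => ‖z‖ ^ (-(4:ℝ))) z
      + (ball 0 (T + ρ)).indicator (fun z : ℝ³ => ‖z‖ ^ (-(2:ℝ))) z :=
    add_nonneg (indicator_nonneg (fun _ _ => by positivity) z)
      (indicator_nonneg (fun _ _ => by positivity) z)
  rw [smearedKernelMajorant]
  by_cases hnear : ‖z‖ < 2 * ρ
  · rw [indicator_of_mem (mem_ball_zero_iff.2 hnear)]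
    have := pow_le_pow_left₀ (smearedKernel_nonneg hC T ρ z)
      (smearedKernel_le_integral_ball (T := T) (R := 3 * ρ) hC (z := z) (by linarith)) 2
    nlinarith
  by_cases hfar : T + ρ ≤ ‖z‖
  · rw [smearedKernel_eq_zero_of_le_norm hfar, zero_pow two_ne_zero]
    exact add_nonneg (indicator_nonneg (fun _ _ => sq_nonneg _) z)
      (mul_nonneg (by positivity) hnonneg)
  push Not at hnear hfar
  rw [indicator_of_notMem (by simpa using hnear), indicator_of_mem (by simpa using hnear),
    indicator_of_mem (mem_ball_zero_iff.2 hfar), zero_add]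
  exact sq_smearedKernel_le_of_two_mul_le_norm hC hρ T hnear

theorem integral_sq_smearedKernel_le {C T ρ : ℝ} (hC : 0 ≤ C) (hT : 0 ≤ T) (hρ : 0 < ρ) :
    ∫ z, smearedKernel C T ρ z ^ 2
      ≤ (2 * ρ) ^ 3 * ω₃ * (C * ω₃ * (9 * ρ + 27 * ρ ^ 2 / 2)) ^ 2
        + 32 * (ρ ^ 3 * ω₃ * C) ^ 2 * (3 * ω₃ / (2 * ρ) + 3 * ω₃ * (T + ρ)) := by
  have hint₁ := (integrableOn_const (C := (∫ x in ball 0 (3 * ρ), greenKernel C x) ^ 2)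
    (measure_ball_lt_top (μ := volume) (x := (0 : ℝ³)) (r := 2 * ρ)).ne).integrable_indicator
      measurableSet_ball
  have hint₂ := (integrableOn_norm_rpow_compl_ball (volume : Measure ℝ³) (p := -4) (a := 2 * ρ)
    (by norm_num) (by positivity)).integrable_indicator measurableSet_ball.compl
  have hint₃ := (integrableOn_norm_rpow_ball (volume : Measure ℝ³) (p := -2) (by norm_num)
    (T + ρ)).integrable_indicator measurableSet_ball
  have hint₂₃ := (hint₂.fun_add hint₃).const_mul (32 * (ρ ^ 3 * ω₃ * C) ^ 2)
  calc ∫ z, smearedKernel C T ρ z ^ 2 ≤ ∫ z, smearedKernelMajorant C T ρ z :=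
        integral_mono_of_nonneg (.of_forall fun z => sq_nonneg _) (hint₁.add hint₂₃)
          (.of_forall (sq_smearedKernel_le_majorant hC hρ T))
    _ = _ := by
      unfold smearedKernelMajorant
      rw [integral_add hint₁ hint₂₃, integral_const_mul, integral_add hint₂ hint₃,
        integral_indicator measurableSet_ball, integral_indicator measurableSet_ball.compl,
        integral_indicator measurableSet_ball, setIntegral_const, smul_eq_mul,
        volume_real_ball_eq_pow_mul 0 (by positivity), integral_greenKernel_ball C (by positivity),
        integral_norm_rpow_compl_ball volume (by norm_num) (by positivity),
        integral_norm_rpow_ball volume (by norm_num) (by positivity), finrank_euclideanSpace_fin]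
      norm_num [rpow_neg_one]
      field_simp
      ring

theorem rpow_mul_integral_sq_smearedKernel_le {C r T : ℝ} (hC : 0 ≤ C) (hr : 0 < r) (hr1 : r ≤ 1)
    (hT : 0 ≤ T) :
    r ^ (-(1:ℝ) - 3) * ∫ z, smearedKernel C T (3 * r) z ^ 2
      ≤ 5000000 * C ^ 2 * ω₃ ^ 3 * (r + r ^ 2 * T) := by
  have hrpow : r ^ (-(1:ℝ) - 3) = (r ^ 4)⁻¹ := by
    rw [show -(1:ℝ) - 3 = -((4 : ℕ) : ℝ) by norm_num, rpow_neg hr.le, rpow_natCast]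
  have hexpand : (2 * (3 * r)) ^ 3 * ω₃ * (C * ω₃ * (9 * (3 * r) + 27 * (3 * r) ^ 2 / 2)) ^ 2
        + 32 * ((3 * r) ^ 3 * ω₃ * C) ^ 2 * (3 * ω₃ / (2 * (3 * r)) + 3 * ω₃ * (T + 3 * r))
      = C ^ 2 * ω₃ ^ 3 * r ^ 5
        * (216 * (27 + 243 * r / 2) ^ 2 + 23328 * (1 / 2 + 3 * (r * T) + 9 * r ^ 2)) := by
    field_simp
    ring
  have hpoly : 216 * (27 + 243 * r / 2) ^ 2 + 23328 * (1 / 2 + 3 * (r * T) + 9 * r ^ 2)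
      ≤ 5000000 * (1 + r * T) := by
    nlinarith [mul_nonneg hr.le hT]
  rw [hrpow, inv_mul_le_iff₀ (by positivity)]
  calc ∫ z, smearedKernel C T (3 * r) z ^ 2
      ≤ C ^ 2 * ω₃ ^ 3 * r ^ 5
        * (216 * (27 + 243 * r / 2) ^ 2 + 23328 * (1 / 2 + 3 * (r * T) + 9 * r ^ 2)) :=
        hexpand ▸ integral_sq_smearedKernel_le hC hT (by positivity)
    _ ≤ C ^ 2 * ω₃ ^ 3 * r ^ 5 * (5000000 * (1 + r * T)) := by gcongr
    _ = r ^ 4 * (5000000 * C ^ 2 * ω₃ ^ 3 * (r + r ^ 2 * T)) := by ring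

/-- In `d = 3`: the convolution-square estimate for the truncated Green kernel smeared over
balls of radius `3r`:
`r^{-1-d} ∫ (∫_{|x|<T, |x-z|<3r} γ(x) dx)² dz ≤ C'(r + r^{d-1} T) ≤ 2 C' r` when `rT ≤ 1`. -/
theorem stmt8 (C : ℝ) (hC : 0 ≤ C) :
    ∃ C' : ℝ, 0 < C' ∧
      ∀ r T : ℝ, r ∈ Set.Ioc (0:ℝ) 1 → 1 ≤ T → r * T ≤ 1 →
        (r ^ (-(1:ℝ) - 3) *
          ∫ z : EuclideanSpace ℝ (Fin 3),
            (∫ x in {x : EuclideanSpace ℝ (Fin 3) | ‖x‖ < T ∧ ‖x - z‖ < 3 * r},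
              greenKernel C x) ^ 2
          ≤ C' * (r + r ^ (3 - 1) * T))
        ∧ C' * (r + r ^ (3 - 1) * T) ≤ 2 * C' * r := by
  have hω : 0 ≤ ω₃ := measureReal_nonneg
  refine ⟨5000000 * C ^ 2 * ω₃ ^ 3 + 1, by positivity, ?_⟩
  rintro r T ⟨hr, hr1⟩ hT hrT
  have hball (z : ℝ³) : {x : ℝ³ | ‖x‖ < T ∧ ‖x - z‖ < 3 * r} = ball 0 T ∩ ball z (3 * r) := by
    ext x; simp [dist_eq_norm]
  simp only [hball, Nat.reduceSub]
  refine ⟨(rpow_mul_integral_sq_smearedKernel_le hC hr hr1 (by linarith)).trans ?_, ?_⟩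
  · gcongr
    linarith
  · have hr2T : r ^ 2 * T ≤ r := by nlinarith
    calc _ ≤ (5000000 * C ^ 2 * ω₃ ^ 3 + 1) * (r + r) := by gcongr
      _ = _ := by ring
end

section
/- Let $(a_n)$ and $(b_n)$ be sequences of nonnegative reals such that $\sum_n (\log n)\, a_n < \infty$ and $\sum_n (\log n)^2\, b_n < \infty$. Then there exists an increasing sequence of positive integers $(N_n)$ with $N_n/\log n \to \infty$ such that $\sum_n \big( N_n a_n + N_n^2 b_n \big) < \infty$. -/
/-!
A summable nonnegative series `∑ fₙ` can always be slowed down by weights `cₙ → ∞`: if `sₙ` is a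
positive majorant of the tails of `∑ f` with `fₙ ≤ sₙ - sₙ₊₁`, then `fₙ / √sₙ ≤ 2 (√sₙ - √sₙ₊₁)`
telescopes, so `cₙ = 1 + 1/√sₙ` works. Applying this to `fₙ = (log n) aₙ + (log n)² bₙ` and taking
`Nₙ ≈ √cₙ · log n` gives `Nₙ aₙ + Nₙ² bₙ ≤ 4 cₙ fₙ` for `n ≥ 3`.
-/

open Filter Topology

theorem summable_div_sqrt_of_le_sub {s f : ℕ → ℝ} (hs : ∀ n, 0 < s n) (hf : ∀ n, 0 ≤ f n)
    (hfs : ∀ n, f n ≤ s n - s (n + 1)) : Summable fun n => f n / √(s n) := by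
  have step : ∀ n, f n / √(s n) ≤ 2 * √(s n) - 2 * √(s (n + 1)) := fun n => by
    have hu : 0 < √(s n) := Real.sqrt_pos.mpr (hs n)
    have hv : 0 ≤ √(s (n + 1)) := Real.sqrt_nonneg _
    have hu2 := Real.sq_sqrt (hs n).le
    have hv2 := Real.sq_sqrt (hs (n + 1)).le
    have hvu : √(s (n + 1)) ≤ √(s n) := Real.sqrt_le_sqrt (by linarith [hf n, hfs n])
    rw [div_le_iff₀ hu]
    nlinarith [hfs n]
  refine summable_of_sum_range_le (c := 2 * √(s 0))
    (fun n => div_nonneg (hf n) (Real.sqrt_nonneg _)) fun n => ?_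
  calc ∑ i ∈ Finset.range n, f i / √(s i)
      ≤ ∑ i ∈ Finset.range n, (2 * √(s i) - 2 * √(s (i + 1))) :=
        Finset.sum_le_sum fun i _ => step i
    _ = 2 * √(s 0) - 2 * √(s n) := Finset.sum_range_sub' (fun i => 2 * √(s i)) n
    _ ≤ 2 * √(s 0) := by linarith [Real.sqrt_nonneg (s n)]

theorem Summable.exists_monotone_tendsto_atTop_summable_mul {f : ℕ → ℝ} (hf : ∀ n, 0 ≤ f n)
    (hs : Summable f) : ∃ c : ℕ → ℝ, Monotone c ∧ (∀ n, 1 ≤ c n) ∧ Tendsto c atTop atTop ∧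
      Summable fun n => c n * f n := by
  -- the geometric term keeps the tail majorant `s` strictly positive
  set s : ℕ → ℝ := fun n => (∑' i, f i - ∑ i ∈ Finset.range n, f i) + 2⁻¹ ^ n with hs_def
  have hs_pos : ∀ n, 0 < s n := fun n => by
    have := hs.sum_le_tsum (Finset.range n) fun i _ => hf i
    have : (0 : ℝ) < 2⁻¹ ^ n := by positivity
    simp only [hs_def]
    linarith
  have hfs : ∀ n, f n ≤ s n - s (n + 1) := fun n => by
    have : (2⁻¹ : ℝ) ^ (n + 1) ≤ 2⁻¹ ^ n :=
      pow_le_pow_of_le_one (by norm_num) (by norm_num) n.le_succ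
    simp only [hs_def, Finset.sum_range_succ]
    linarith
  have hs_anti : Antitone s := antitone_nat_of_succ_le fun n => by linarith [hf n, hfs n]
  have hs_lim : Tendsto s atTop (𝓝 0) := by
    convert (tendsto_const_nhds.sub hs.hasSum.tendsto_sum_nat).add
      (tendsto_pow_atTop_nhds_zero_of_lt_one (by norm_num : (0 : ℝ) ≤ 2⁻¹) (by norm_num)) using 2
    simp
  have hsqrt_lim : Tendsto (fun n => √(s n)) atTop (𝓝[>] 0) :=
    tendsto_nhdsWithin_of_tendsto_nhds_of_eventually_within _
      ((Real.continuous_sqrt.tendsto' 0 0 Real.sqrt_zero).comp hs_lim)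
      (Eventually.of_forall fun n => Real.sqrt_pos.mpr (hs_pos n))
  refine ⟨fun n => 1 + (√(s n))⁻¹, fun m n hmn => ?_, fun n => ?_,
    tendsto_atTop_add_const_left _ 1 hsqrt_lim.inv_tendsto_nhdsGT_zero, ?_⟩
  · exact add_le_add_right (inv_anti₀ (Real.sqrt_pos.mpr (hs_pos n))
      (Real.sqrt_le_sqrt (hs_anti hmn))) 1
  · exact le_add_of_nonneg_right (inv_nonneg.mpr (Real.sqrt_nonneg _))
  · simpa only [add_mul, one_mul, inv_mul_eq_div] using
      hs.add (summable_div_sqrt_of_le_sub hs_pos hf hfs)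

theorem monotone_log_natCast : Monotone fun n : ℕ => Real.log n := fun m n hmn => by
  rcases m.eq_zero_or_pos with rfl | hm
  · simpa using Real.log_natCast_nonneg n
  · exact Real.log_le_log (by exact_mod_cast hm) (by exact_mod_cast hmn)

theorem one_le_log_natCast {n : ℕ} (hn : 3 ≤ n) : 1 ≤ Real.log n := by
  rw [Real.le_log_iff_exp_le (by positivity)]
  calc Real.exp 1 ≤ 3 := by linarith [Real.exp_one_lt_d9]
    _ ≤ n := by exact_mod_cast hn

theorem mul_add_sq_mul_le_four_mul {c L x A B : ℝ} (hc : 1 ≤ c) (hL : 1 ≤ L) (hx0 : 0 ≤ x)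
    (hx : x ≤ √c * L + 1) (hA : 0 ≤ A) (hB : 0 ≤ B) :
    x * A + x ^ 2 * B ≤ 4 * c * (L * A + L ^ 2 * B) := by
  have hsqrt_one : 1 ≤ √c := Real.one_le_sqrt.mpr hc
  have hsqrt_le : √c ≤ c := Real.sqrt_le_self_iff.mpr (Or.inr hc)
  have hx2 : x ≤ 2 * √c * L := by nlinarith
  have hxA : x * A ≤ 4 * c * (L * A) := by
    calc x * A ≤ 2 * √c * L * A := by gcongr
      _ ≤ 4 * c * (L * A) := by nlinarith [mul_nonneg (by linarith : (0 : ℝ) ≤ L) hA]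
  have hxB : x ^ 2 * B ≤ 4 * c * (L ^ 2 * B) := by
    calc x ^ 2 * B ≤ (2 * √c * L) ^ 2 * B := by gcongr
      _ = 4 * c * (L ^ 2 * B) := by rw [mul_pow, mul_pow, Real.sq_sqrt (by linarith)]; ring
  linarith

/-- If `∑ (log n) aₙ < ∞` and `∑ (log n)² bₙ < ∞` with `aₙ, bₙ ≥ 0`, then one can choose an
increasing sequence of positive integers `Nₙ` with `Nₙ/log n → ∞` and
`∑ (Nₙ aₙ + Nₙ² bₙ) < ∞`. -/
theorem stmt10 (a b : ℕ → ℝ) (ha : ∀ n, 0 ≤ a n) (hb : ∀ n, 0 ≤ b n)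
    (hsa : Summable (fun n : ℕ => Real.log n * a n))
    (hsb : Summable (fun n : ℕ => (Real.log n) ^ 2 * b n)) :
    ∃ N : ℕ → ℕ, Monotone N ∧ (∀ n, 0 < N n) ∧
      Tendsto (fun n => (N n : ℝ) / Real.log n) atTop atTop ∧
      Summable (fun n => (N n : ℝ) * a n + (N n : ℝ) ^ 2 * b n) := by
  obtain ⟨c, hc_mono, hc_one, hc_lim, hc_sum⟩ :=
    (hsa.add hsb).exists_monotone_tendsto_atTop_summable_mul fun n =>
      add_nonneg (mul_nonneg (Real.log_natCast_nonneg n) (ha n))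
        (mul_nonneg (sq_nonneg _) (hb n))
  set e : ℕ → ℝ := fun n => √(c n) * Real.log n
  have he_mono : Monotone e := fun m n hmn => mul_le_mul (Real.sqrt_le_sqrt (hc_mono hmn))
    (monotone_log_natCast hmn) (Real.log_natCast_nonneg m) (Real.sqrt_nonneg _)
  have he_nonneg : ∀ n, 0 ≤ e n := fun n => by positivity
  refine ⟨fun n => ⌊e n⌋₊ + 1, fun m n hmn => Nat.succ_le_succ (Nat.floor_mono (he_mono hmn)),
    fun n => Nat.succ_pos _, ?_, ?_⟩
  · refine tendsto_atTop_mono' _ ?_ (Real.tendsto_sqrt_atTop.comp hc_lim)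
    filter_upwards [eventually_ge_atTop 2] with n hn
    rw [Function.comp_apply, le_div_iff₀ (Real.log_pos (by exact_mod_cast hn))]
    exact_mod_cast (Nat.lt_floor_add_one (e n)).le
  · refine (hc_sum.mul_left 4).of_norm_bounded_eventually_nat ?_
    filter_upwards [eventually_ge_atTop 3] with n hn
    rw [Real.norm_of_nonneg (by have := ha n; have := hb n; positivity), ← mul_assoc]
    push_cast
    exact mul_add_sq_mul_le_four_mul (hc_one n) (one_le_log_natCast hn) (by positivity)
      (by linarith [Nat.floor_le (he_nonneg n)]) (ha n) (hb n)
end
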